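/- With the tree T_S defined from a finite set S of arguments as above: a finite set S is disjoint from G⁺ (the set of arguments attacked by the grounded extension) if and only if T_S has an infinite path. -/

import Mathlib

def defenseFn {A : Type*} (att : A → A → Prop) (S : Set A) : Set A :=
  {x | ∀ y, att y x → ∃ z ∈ S, att z y}

/-- `Gr` is the grounded extension: the least fixed point of the defense function. -/
def IsGrounded {A : Type*} (att : A → A → Prop) (Gr : Set A) : Prop :=
  defenseFn att Gr = Gr ∧ ∀ S, defenseFn att S = S → Gr ⊆ S

/-- `π` is an infinite path through the tree `T`. -/
def IsPath (T : Set (List ℕ)) (π : ℕ → ℕ) : Prop :=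
  ∀ n : ℕ, (List.ofFn fun i : Fin n => π i) ∈ T

/-- `ran_S(σ) = S ∪ {a_{σ(k)-1} : σ(k) ≥ 1}`. -/
def ranS {A : Type} (a : ℕ → A) (S : Set A) (σ : List ℕ) : Set A :=
  S ∪ {x | ∃ k : Fin σ.length, 1 ≤ σ.get k ∧ x = a (σ.get k - 1)}

/-- The branching rule of the tree `T_S` at a node `ρ` (with `n` the first
component of the unpairing of `|ρ|`): if `a_n` attacks some element of
`ran_S(ρ)`, the children are the `i+1` with `a_i` attacking `a_n`; otherwise
the unique child is `0`. -/
def stepOK {A : Type} (att : A → A → Prop) (a : ℕ → A) (S : Set A)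
    (ρ : List ℕ) (i : ℕ) : Prop :=
  ((∃ x ∈ ranS a S ρ, att (a (Nat.unpair ρ.length).1) x) ∧
      1 ≤ i ∧ att (a (i - 1)) (a (Nat.unpair ρ.length).1)) ∨
  ((¬ ∃ x ∈ ranS a S ρ, att (a (Nat.unpair ρ.length).1) x) ∧ i = 0)

/-- The tree `T_S`: all finite sequences each of whose steps obeys `stepOK`. -/
def TS {A : Type} (att : A → A → Prop) (a : ℕ → A) (S : Set A) : Set (List ℕ) :=
  {σ | ∀ (ρ : List ℕ) (i : ℕ), ρ ++ [i] <+: σ → stepOK att a S ρ i}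

/-!
The complement `U` of `G⁺` is self-defending (`U ⊆ defenseFn U`): an attacker of an element of `U`
cannot be defended by `G`, for then it would lie in `G`. Conversely `G`, lying below every set closed under
defense, never attacks a self-defending set. So `S` misses `G⁺` iff `S` lies in a self-defending
set. Inside a self-defending set the tree `T_S` can always be extended by picking defenders, which
gives a path; and the arguments recorded along a path form a self-defending set containing `S`,
because at stage `⟨n, ℓ⟩` every attack of `a_n` on an argument recorded by stage `ℓ` is answered.
-/

open Function

theorem defenseFn_mono {A : Type*} (att : A → A → Prop) : Monotone (defenseFn att) :=
  fun _ _ hST _ hx y hy => (hx y hy).imp fun _ ⟨hz, h⟩ => ⟨hST hz, h⟩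

namespace IsGrounded

variable {A : Type*} {att : A → A → Prop} {Gr : Set A}

theorem subset_defenseFn_compl (hGr : IsGrounded att Gr) :
    {x | ¬ ∃ g ∈ Gr, att g x} ⊆ defenseFn att {x | ¬ ∃ g ∈ Gr, att g x} := by
  intro x hx y hyx
  by_contra hy
  refine hx ⟨y, hGr.1.subset fun z hzy => ?_, hyx⟩
  by_contra hz
  exact hy ⟨z, hz, hzy⟩

theorem not_attacks_of_subset_defenseFn (hGr : IsGrounded att Gr) {X : Set A}
    (hX : X ⊆ defenseFn att X) {g x : A} (hg : g ∈ Gr) (hx : x ∈ X) : ¬ att g x := by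
  let D : Set A →o Set A := ⟨defenseFn att, defenseFn_mono att⟩
  have hclosed : D {g | ∀ x ∈ X, ¬ att g x} ≤ {g | ∀ x ∈ X, ¬ att g x} := by
    intro g hg x hx hgx
    obtain ⟨z, hzX, hzg⟩ := hX hx g hgx
    obtain ⟨w, hw, hwz⟩ := hg z hzg
    exact hw z hzX hwz
  exact ((hGr.2 _ D.map_lfp).trans (OrderHom.lfp_le D hclosed)) hg x hx

end IsGrounded

theorem List.ofFn_succ_eq_append {α : Type*} (π : ℕ → α) (n : ℕ) :
    (List.ofFn fun i : Fin (n + 1) => π i) = (List.ofFn fun i : Fin n => π i) ++ [π n] := by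
  rw [List.ofFn_succ_last]
  rfl

theorem exists_seq_of_forall_exists_append {α : Type*} {P : List α → Prop}
    {R : List α → α → Prop} (h0 : P []) (hstep : ∀ σ, P σ → ∃ i, R σ i ∧ P (σ ++ [i])) :
    ∃ π : ℕ → α, ∀ n, R (List.ofFn fun i : Fin n => π i) (π n) := by
  obtain ⟨i₀, -⟩ := hstep [] h0
  have : Nonempty α := ⟨i₀⟩
  choose! step hR hP using hstep
  let f : ℕ → List α := fun n => Nat.rec [] (fun _ σ => σ ++ [step σ]) n
  have hf : ∀ n, P (f n) := fun n => by
    induction n with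
    | zero => exact h0
    | succ n ih => exact hP _ ih
  have hofFn : ∀ n, (List.ofFn fun i : Fin n => step (f i)) = f n := fun n => by
    induction n with
    | zero => rfl
    | succ n ih => rw [List.ofFn_succ_eq_append (fun i => step (f i)), ih]
  exact ⟨fun n => step (f n), fun n => hofFn n ▸ hR _ (hf n)⟩

section Tree

variable {A : Type} {att : A → A → Prop} {a : ℕ → A} {S : Set A}

theorem mem_ranS_iff {σ : List ℕ} {x : A} :
    x ∈ ranS a S σ ↔ x ∈ S ∨ ∃ m ∈ σ, 1 ≤ m ∧ x = a (m - 1) := by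
  constructor
  · rintro (h | ⟨k, h1, h2⟩)
    · exact Or.inl h
    · exact Or.inr ⟨σ.get k, List.get_mem σ k, h1, h2⟩
  · rintro (h | ⟨m, hm, h1, h2⟩)
    · exact Or.inl h
    · obtain ⟨k, rfl⟩ := List.mem_iff_get.1 hm
      exact Or.inr ⟨k, h1, h2⟩

@[simp]
theorem ranS_nil : ranS a S [] = S := by
  ext x
  simp [mem_ranS_iff]

theorem mem_ranS_append_singleton {σ : List ℕ} {i : ℕ} {x : A} :
    x ∈ ranS a S (σ ++ [i]) ↔ x ∈ ranS a S σ ∨ (1 ≤ i ∧ x = a (i - 1)) := by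
  simp only [mem_ranS_iff, List.mem_append, List.mem_singleton]
  grind

theorem ranS_mono {σ τ : List ℕ} (h : σ ⊆ τ) : ranS a S σ ⊆ ranS a S τ := by
  intro x hx
  rw [mem_ranS_iff] at hx ⊢
  exact hx.imp_right fun ⟨m, hm, hm'⟩ => ⟨m, h hm, hm'⟩

theorem nil_mem_TS : [] ∈ TS att a S :=
  fun _ _ h => by simpa using h.length_le

theorem append_singleton_mem_TS_iff {σ : List ℕ} {i : ℕ} :
    σ ++ [i] ∈ TS att a S ↔ σ ∈ TS att a S ∧ stepOK att a S σ i := by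
  constructor
  · intro h
    exact ⟨fun ρ j hρ => h ρ j (hρ.trans (List.prefix_append σ [i])), h σ i List.prefix_rfl⟩
  · rintro ⟨hσ, hi⟩ ρ j hρ
    rcases List.prefix_concat_iff.1 hρ with heq | hρ
    · obtain ⟨rfl, rfl⟩ : ρ = σ ∧ j = i := by simpa using heq
      exact hi
    · exact hσ ρ j hρ

theorem isPath_TS_iff {π : ℕ → ℕ} :
    IsPath (TS att a S) π ↔ ∀ n, stepOK att a S (List.ofFn fun i : Fin n => π i) (π n) := by
  constructor
  · intro hπ n
    have := hπ (n + 1)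
    rw [List.ofFn_succ_eq_append, append_singleton_mem_TS_iff] at this
    exact this.2
  · intro hπ n
    induction n with
    | zero => exact nil_mem_TS
    | succ n ih => rw [List.ofFn_succ_eq_append, append_singleton_mem_TS_iff]; exact ⟨ih, hπ n⟩

theorem exists_stepOK_of_ranS_subset (ha : Surjective a) {X : Set A}
    (hX : X ⊆ defenseFn att X) {σ : List ℕ} (hσ : ranS a S σ ⊆ X) :
    ∃ i, stepOK att a S σ i ∧ ranS a S (σ ++ [i]) ⊆ X := by
  by_cases hatt : ∃ x ∈ ranS a S σ, att (a (Nat.unpair σ.length).1) x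
  · obtain ⟨x, hx, hax⟩ := hatt
    obtain ⟨z, hzX, hz⟩ := hX (hσ hx) _ hax
    obtain ⟨j, rfl⟩ := ha z
    refine ⟨j + 1, Or.inl ⟨⟨x, hx, hax⟩, Nat.le_add_left 1 j, hz⟩, fun y hy => ?_⟩
    rcases mem_ranS_append_singleton.1 hy with hy | ⟨-, rfl⟩
    · exact hσ hy
    · exact hzX
  · refine ⟨0, Or.inr ⟨hatt, rfl⟩, fun y hy => ?_⟩
    rcases mem_ranS_append_singleton.1 hy with hy | ⟨h, -⟩
    · exact hσ hy
    · omega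

theorem exists_isPath_TS_of_subset_defenseFn (ha : Surjective a) {X : Set A}
    (hX : X ⊆ defenseFn att X) (hSX : S ⊆ X) : ∃ π, IsPath (TS att a S) π := by
  obtain ⟨π, hπ⟩ := exists_seq_of_forall_exists_append (P := fun σ => ranS a S σ ⊆ X)
    (by rwa [ranS_nil]) fun σ => exists_stepOK_of_ranS_subset ha hX
  exact ⟨π, isPath_TS_iff.2 hπ⟩

theorem iUnion_ranS_subset_defenseFn (ha : Surjective a) {π : ℕ → ℕ}
    (hπ : IsPath (TS att a S) π) :
    ⋃ ℓ, ranS a S (List.ofFn fun i : Fin ℓ => π i) ⊆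
      defenseFn att (⋃ ℓ, ranS a S (List.ofFn fun i : Fin ℓ => π i)) := by
  intro x hx y hyx
  obtain ⟨ℓ₀, hx⟩ := Set.mem_iUnion.1 hx
  obtain ⟨n, rfl⟩ := ha y
  set ℓ := Nat.pair n ℓ₀
  have hxℓ : x ∈ ranS a S (List.ofFn fun i : Fin ℓ => π i) := by
    refine ranS_mono (fun m hm => ?_) hx
    obtain ⟨i, rfl⟩ := List.mem_ofFn.1 hm
    exact List.mem_ofFn.2 ⟨⟨i, i.2.trans_le (Nat.right_le_pair n ℓ₀)⟩, rfl⟩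
  have hstep := isPath_TS_iff.1 hπ ℓ
  simp only [stepOK, List.length_ofFn, ℓ, Nat.unpair_pair] at hstep
  rcases hstep with ⟨-, hpos, hdef⟩ | ⟨hno, -⟩
  · refine ⟨a (π ℓ - 1), Set.mem_iUnion.2 ⟨ℓ + 1, ?_⟩, hdef⟩
    rw [List.ofFn_succ_eq_append, mem_ranS_append_singleton]
    exact Or.inr ⟨hpos, rfl⟩
  · exact absurd ⟨x, hxℓ, hyx⟩ hno

end Tree

theorem disjoint_Gplus_iff_path_general {A : Type} (att : A → A → Prop)
    (a : ℕ → A) (ha : Function.Surjective a) (S : Set A)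
    (Gr : Set A) (hGr : IsGrounded att Gr) :
    (∀ x ∈ S, ¬ ∃ g ∈ Gr, att g x) ↔ ∃ π : ℕ → ℕ, IsPath (TS att a S) π := by
  constructor
  · exact exists_isPath_TS_of_subset_defenseFn ha hGr.subset_defenseFn_compl
  · rintro ⟨π, hπ⟩ x hx ⟨g, hg, hgx⟩
    have hx' : x ∈ ⋃ ℓ, ranS a S (List.ofFn fun i : Fin ℓ => π i) :=
      Set.mem_iUnion.2 ⟨0, by simpa using hx⟩
    exact hGr.not_attacks_of_subset_defenseFn (iUnion_ranS_subset_defenseFn ha hπ) hg hx' hgx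

/-- A finite set `S` is disjoint from `G⁺` (the set of arguments attacked by
the grounded extension) iff the tree `T_S` has an infinite path. -/
theorem disjoint_Gplus_iff_path {A : Type} (att : A → A → Prop)
    (a : ℕ → A) (ha : Function.Surjective a) (S : Set A) (hS : S.Finite)
    (Gr : Set A) (hGr : IsGrounded att Gr) :
    (∀ x ∈ S, ¬ ∃ g ∈ Gr, att g x) ↔ ∃ π : ℕ → ℕ, IsPath (TS att a S) π :=
  disjoint_Gplus_iff_path_general att a ha S Gr hGr
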